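/- arXiv:math/9709214 — 2 statements merged into one kernel-verified Lean document; each statement's English description precedes it below -/
import Mathlib

section
/- Let $k \ge 1$, fix $j \in \mathbb{N}$, and let $g_{j,1}, \dots, g_{j,k}, g_{j,k+1}$ be independent symmetric random variables on $[0,1]$ taking only the values $-1, 0, 1$, with $\int |g_{j,i}| = \mu_i$ for $i = 1, \dots, k$ and $\int |g_{j,k+1}| = \nu_j$. Set $f_j = \sum_{i=1}^k g_{j,i} + j\, g_{j,k+1}$. Then for every integer $m$ with $1 \le m \le k$: $\|f_j\|_{2m}^{2m} = F^{(j)}_m(\mu_1, \dots, \mu_k, \nu_j)$, where $F^{(j)}_m(\mu_1, \dots, \mu_k, \nu) = H_m(\mu_1, \dots, \mu_k) + \nu \sum_{l=1}^{m} \binom{2m}{2l} j^{2l} H_{m-l}(\mu_1, \dots, \mu_k)$. -/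
/-!
Write `A = ∑ᵢ gᵢ` and `B = g_{k+1}`, and expand `(A + j B)^{2m}` binomially. By independence
each term factors; the odd moments of the symmetric `B` vanish and its nonzero even moments all
equal `ν`. The even moments of `A` come from the multinomial expansion in the same way: a
multi-index contributes only if all its entries are even, and then it contributes its multinomial
coefficient times the product of the `μᵢ` over its support. Halving the entries, the
multinomial coefficients over the multi-indices with a given support `S` add up to `C_{m,|S|}`.
-/

open MeasureTheory ProbabilityTheory Finset

noncomputable def mu01 : MeasureTheory.Measure ℝ :=
  MeasureTheory.volume.restrict (Set.Icc (0 : ℝ) 1)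

/-- `Ccoef m α = C_{m,α} = ∑_{n₁+⋯+n_α = m, nᵢ ≥ 1} (2m)! / ((2n₁)! ⋯ (2n_α)!)`. -/
def Ccoef (m α : ℕ) : ℕ :=
  ∑ c ∈ (Finset.Nat.antidiagonalTuple α m).filter (fun c => ∀ i, 1 ≤ c i),
    Nat.multinomial Finset.univ (fun i => 2 * c i)

/-- The polynomial `H_m(μ₁, …, μ_k) = ∑_{α=1}^m ∑_{S ⊆ {1,…,k}, |S| = α} C_{m,α} ∏_{i∈S} μᵢ`,
with the convention `H₀ = 1`. -/
def Hpoly (k m : ℕ) (μ : Fin k → ℝ) : ℝ :=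
  ∑ α ∈ Finset.range (m + 1), ∑ S ∈ Finset.univ.powersetCard α,
    (Ccoef m α : ℝ) * ∏ i ∈ S, μ i

/-- `F^{(j)}_m(μ₁,…,μ_k, ν) = H_m(μ) + ν ∑_{l=1}^m (2m choose 2l) j^{2l} H_{m-l}(μ)`. -/
def Fpoly (k j m : ℕ) (μ : Fin k → ℝ) (ν : ℝ) : ℝ :=
  Hpoly k m μ +
    ν * ∑ l ∈ Finset.Icc 1 m, ((2 * m).choose (2 * l) : ℝ) * (j : ℝ) ^ (2 * l) *
      Hpoly k (m - l) μ

/-- `∫ X ^ n` for a symmetric `X` with values in `{-1, 0, 1}` and `∫ |X| = a`. -/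
def threeValuedMoment (a : ℝ) (n : ℕ) : ℝ :=
  if n = 0 then 1 else if Even n then a else 0

lemma threeValuedMoment_eq_zero_of_odd (a : ℝ) {n : ℕ} (hn : Odd n) :
    threeValuedMoment a n = 0 := by
  simp [threeValuedMoment, hn.pos.ne', Nat.not_even_iff_odd.mpr hn]

lemma threeValuedMoment_two_mul (a : ℝ) (n : ℕ) :
    threeValuedMoment a (2 * n) = if n = 0 then 1 else a := by
  simp [threeValuedMoment]

lemma abs_le_one_of_mem_neg_one_zero_one {y : ℝ} (hy : y ∈ ({-1, 0, 1} : Set ℝ)) :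
    |y| ≤ 1 := by
  rcases hy with rfl | rfl | rfl <;> norm_num

lemma pow_eq_abs_of_mem_neg_one_zero_one {y : ℝ} (hy : y ∈ ({-1, 0, 1} : Set ℝ)) {n : ℕ}
    (hn : n ≠ 0) (he : Even n) : y ^ n = |y| := by
  rcases hy with rfl | rfl | rfl <;> simp [he.neg_one_pow, hn]

section Multinomial

variable {ι κ : Type*} [Fintype ι] [Fintype κ]

lemma multinomial_comp_of_injective {e : κ → ι} (he : e.Injective) {d : ι → ℕ}
    (hd : ∀ x ∉ Set.range e, d x = 0) :
    Nat.multinomial univ (d ∘ e) = Nat.multinomial univ d := by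
  simp only [Nat.multinomial, Function.comp_apply]
  rw [Fintype.sum_of_injective e he _ d hd (fun _ => rfl),
    Fintype.prod_of_injective e he _ (fun x => (d x).factorial) (fun x hx => by simp [hd x hx])
      (fun _ => rfl)]

variable [DecidableEq ι]

lemma sum_multinomial_of_support_eq_range [DecidableEq κ] {e : κ → ι} (he : e.Injective)
    (m : ℕ) :
    ∑ d ∈ (piAntidiag univ m).filter (fun d => ∀ x, d x ≠ 0 ↔ x ∈ Set.range e),
      Nat.multinomial univ (2 • d)
      = ∑ c ∈ (piAntidiag univ m).filter (fun c : κ → ℕ => ∀ a, c a ≠ 0),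
      Nat.multinomial univ (2 • c) := by
  have extend_ne_zero {c : κ → ℕ} (hc : ∀ a, c a ≠ 0) (x : ι) :
      Function.extend e c (0 : ι → ℕ) x ≠ 0 ↔ x ∈ Set.range e := by
    constructor
    · intro hx
      by_contra h
      exact hx (Function.extend_apply' c (0 : ι → ℕ) x (by simpa using h))
    · rintro ⟨a, rfl⟩
      rw [he.extend_apply]
      exact hc a
  refine sum_nbij' (· ∘ e) (fun c => Function.extend e c (0 : ι → ℕ)) ?_ ?_ ?_ ?_ ?_
  · simp only [mem_filter, mem_piAntidiag, mem_univ, implies_true, and_true, Function.comp_apply]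
    rintro d ⟨rfl, hd⟩
    exact ⟨Fintype.sum_of_injective e he _ d (fun x hx => not_not.mp (mt (hd x).mp hx))
      (fun _ => rfl), fun a => (hd (e a)).mpr ⟨a, rfl⟩⟩
  · simp only [mem_filter, mem_piAntidiag, mem_univ, implies_true, and_true]
    rintro c ⟨rfl, hc⟩
    refine ⟨(Fintype.sum_of_injective e he _ _
      (fun x hx => not_not.mp (mt (extend_ne_zero hc x).mp hx)) (fun a => ?_)).symm,
      extend_ne_zero hc⟩
    rw [he.extend_apply]
  · simp only [mem_filter]
    rintro d ⟨-, hd⟩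
    ext x
    by_cases hx : x ∈ Set.range e
    · obtain ⟨a, rfl⟩ := hx
      simp [he.extend_apply]
    · rw [Function.extend_apply' _ _ _ (by simpa using hx)]
      exact (not_not.mp (mt (hd x).mp hx)).symm
  · intro c _
    exact Function.extend_comp he c 0
  · simp only [mem_filter]
    rintro d ⟨-, hd⟩
    exact (multinomial_comp_of_injective he fun x hx => by
      simp [not_not.mp (mt (hd x).mp hx)]).symm

lemma Ccoef_card_eq_sum (S : Finset ι) (m : ℕ) :
    Ccoef m #S = ∑ d ∈ (piAntidiag univ m).filter (fun d => ({x | d x ≠ 0} : Finset ι) = S),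
      Nat.multinomial univ (2 • d) := by
  set e : Fin #S → ι := fun a => S.equivFin.symm a
  have he : e.Injective := Subtype.val_injective.comp S.equivFin.symm.injective
  have hrange : Set.range e = S := by
    ext x
    constructor
    · rintro ⟨a, rfl⟩
      exact (S.equivFin.symm a).2
    · intro hx
      exact ⟨S.equivFin ⟨x, hx⟩, by simp [e]⟩
  rw [Ccoef, ← piAntidiag_univ_fin_eq_antidiagonalTuple]
  convert (sum_multinomial_of_support_eq_range he m).symm using 3 with c d
  · simp [Nat.one_le_iff_ne_zero]
  · rfl
  · rw [hrange, Finset.ext_iff]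
    simp

lemma sum_piAntidiag_two_mul {M : Type*} [AddCommMonoid M] (f : (ι → ℕ) → M)
    (hf : ∀ c i, Odd (c i) → f c = 0) (m : ℕ) :
    ∑ c ∈ piAntidiag univ (2 * m), f c = ∑ d ∈ piAntidiag univ m, f (2 • d) := by
  rw [← sum_filter_of_ne (p := fun c => ∀ i, 2 ∣ c i),
    ← map_nsmul_piAntidiag_univ m two_ne_zero, sum_map]
  · rfl
  · intro c _ hc i
    by_contra hi
    exact hc (hf c i (Nat.odd_iff.mpr (Nat.two_dvd_ne_zero.mp hi)))

end Multinomial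

lemma Ccoef_eq_zero_of_lt {m α : ℕ} (h : m < α) : Ccoef m α = 0 := by
  refine sum_eq_zero fun c hc => absurd h (not_lt.mpr ?_)
  simp only [mem_filter, Finset.Nat.mem_antidiagonalTuple] at hc
  calc α = ∑ _i : Fin α, 1 := by simp
    _ ≤ ∑ i, c i := sum_le_sum fun i _ => hc.2 i
    _ = m := hc.1

lemma Hpoly_eq_sum_finset (k m : ℕ) (μ : Fin k → ℝ) :
    Hpoly k m μ = ∑ S : Finset (Fin k), (Ccoef m #S : ℝ) * ∏ i ∈ S, μ i := by
  rw [← sum_filter_of_ne (p := fun S => #S ∈ range (m + 1)), ← sum_fiberwise_eq_sum_filter,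
    Hpoly]
  · refine sum_congr rfl fun α _ => sum_congr (by ext; simp) fun S hS => ?_
    rw [(mem_filter.mp hS).2]
  · intro S _ hS
    by_contra hm
    exact hS (by rw [Ccoef_eq_zero_of_lt (by simpa using hm), Nat.cast_zero, zero_mul])

lemma sum_multinomial_mul_prod_threeValuedMoment (k m : ℕ) (μ : Fin k → ℝ) :
    ∑ c ∈ piAntidiag univ (2 * m),
      (Nat.multinomial univ c : ℝ) * ∏ i, threeValuedMoment (μ i) (c i) = Hpoly k m μ := by
  rw [sum_piAntidiag_two_mul _ fun c i hi => by
      rw [prod_eq_zero (mem_univ i) (threeValuedMoment_eq_zero_of_odd _ hi), mul_zero],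
    Hpoly_eq_sum_finset, ← sum_fiberwise _ fun d => ({x | d x ≠ 0} : Finset (Fin k))]
  refine sum_congr rfl fun S _ => ?_
  rw [Ccoef_card_eq_sum, Nat.cast_sum, sum_mul]
  refine sum_congr rfl fun d hd => congrArg _ ?_
  rw [← (mem_filter.mp hd).2, prod_filter]
  exact prod_congr rfl fun i _ => by simp [threeValuedMoment_two_mul, ite_not]

lemma sum_range_two_mul_add_one_of_odd {M : Type*} [AddCommMonoid M] (f : ℕ → M)
    (hf : ∀ t, Odd t → f t = 0) (m : ℕ) :
    ∑ t ∈ range (2 * m + 1), f t = ∑ l ∈ range (m + 1), f (2 * l) := by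
  induction m with
  | zero => simp
  | succ m ih =>
    rw [show 2 * (m + 1) + 1 = 2 * m + 1 + 1 + 1 by ring, sum_range_succ, sum_range_succ, ih,
      hf _ (odd_two_mul_add_one m), add_zero, sum_range_succ _ (m + 1), mul_add_one]

lemma sum_range_succ_eq_add_sum_Icc {M : Type*} [AddCommMonoid M] (f : ℕ → M) (m : ℕ) :
    ∑ l ∈ range (m + 1), f l = f 0 + ∑ l ∈ Icc 1 m, f l := by
  rw [range_eq_Ico, sum_eq_sum_Ico_succ_bot m.succ_pos, zero_add, Nat.succ_eq_add_one,
    Ico_add_one_right_eq_Icc]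

lemma sum_choose_mul_threeValuedMoment (ν c : ℝ) (a : ℕ → ℝ) (m : ℕ) :
    ∑ t ∈ range (2 * m + 1),
        ((2 * m).choose t : ℝ) * c ^ t * threeValuedMoment ν t * a (2 * m - t)
      = a (2 * m) +
        ν * ∑ l ∈ Icc 1 m, ((2 * m).choose (2 * l) : ℝ) * c ^ (2 * l) * a (2 * (m - l)) := by
  rw [sum_range_two_mul_add_one_of_odd _ fun t ht => by
      rw [threeValuedMoment_eq_zero_of_odd _ ht, mul_zero, zero_mul],
    sum_range_succ_eq_add_sum_Icc, mul_sum]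
  congr 1
  · simp [threeValuedMoment]
  · refine sum_congr rfl fun l hl => ?_
    rw [threeValuedMoment_two_mul, if_neg (by grind), Nat.mul_sub]
    ring

namespace ProbabilityTheory

variable {Ω : Type*} [MeasurableSpace Ω] {μ : Measure Ω}

lemma integral_pow_eq_zero_of_map_neg_eq {X : Ω → ℝ} (hX : AEMeasurable X μ)
    (hsymm : μ.map X = μ.map (fun ω => -X ω)) {n : ℕ} (hn : Odd n) :
    ∫ ω, X ω ^ n ∂μ = 0 := by
  have hpow (ν : Measure ℝ) : AEStronglyMeasurable (fun y : ℝ => y ^ n) ν :=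
    (continuous_pow n).aestronglyMeasurable
  have : ∫ ω, X ω ^ n ∂μ = -∫ ω, X ω ^ n ∂μ := by
    calc ∫ ω, X ω ^ n ∂μ = ∫ y, y ^ n ∂(μ.map X) := (integral_map hX (hpow _)).symm
      _ = ∫ ω, (-X ω) ^ n ∂μ := by
        rw [hsymm, integral_map (φ := fun ω => -X ω) hX.neg (hpow _)]
      _ = -∫ ω, X ω ^ n ∂μ := by simp only [hn.neg_pow, integral_neg]
  linarith

lemma integral_pow_eq_threeValuedMoment [IsProbabilityMeasure μ] {X : Ω → ℝ}
    (hX : Measurable X) (hval : ∀ ω, X ω ∈ ({-1, 0, 1} : Set ℝ))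
    (hsymm : μ.map X = μ.map (fun ω => -X ω)) (n : ℕ) :
    ∫ ω, X ω ^ n ∂μ = threeValuedMoment (∫ ω, |X ω| ∂μ) n := by
  unfold threeValuedMoment
  split_ifs with h0 he
  · simp [h0]
  · exact integral_congr_ae
      (ae_of_all _ fun ω => pow_eq_abs_of_mem_neg_one_zero_one (hval ω) h0 he)
  · exact integral_pow_eq_zero_of_map_neg_eq hX.aemeasurable hsymm (Nat.not_even_iff_odd.mp he)

lemma iIndepFun.integral_sum_pow {ι : Type*} [Fintype ι] [DecidableEq ι] {G : ι → Ω → ℝ}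
    (hindep : iIndepFun G μ) (hmeas : ∀ i, Measurable (G i)) {C : ℝ}
    (hbdd : ∀ i ω, |G i ω| ≤ C) (n : ℕ) :
    ∫ ω, (∑ i, G i ω) ^ n ∂μ
      = ∑ c ∈ piAntidiag univ n,
          (Nat.multinomial univ c : ℝ) * ∏ i, ∫ ω, G i ω ^ c i ∂μ := by
  have := hindep.isProbabilityMeasure
  have hint (c : ι → ℕ) : Integrable (fun ω => ∏ i, G i ω ^ c i) μ := by
    refine .of_bound (by fun_prop) (∏ i, C ^ c i) (ae_of_all _ fun ω => ?_)
    simp only [norm_prod, norm_pow, Real.norm_eq_abs]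
    exact prod_le_prod (fun i _ => by positivity)
      fun i _ => pow_le_pow_left₀ (abs_nonneg _) (hbdd i ω) _
  simp_rw [sum_pow_eq_sum_piAntidiag]
  rw [integral_finsetSum _ fun c _ => (hint c).const_mul _]
  refine sum_congr rfl fun c _ => ?_
  rw [integral_const_mul, hindep.integral_fun_prod_comp (f := fun i y => y ^ c i)
    (fun i => (hmeas i).aemeasurable) fun i => (continuous_pow _).aestronglyMeasurable]

lemma integral_sum_pow_two_mul_eq_Hpoly {k : ℕ} {G : Fin k → Ω → ℝ}
    (hindep : iIndepFun G μ) (hmeas : ∀ i, Measurable (G i))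
    (hval : ∀ i ω, G i ω ∈ ({-1, 0, 1} : Set ℝ))
    (hsymm : ∀ i, μ.map (G i) = μ.map (fun ω => -G i ω)) (m : ℕ) :
    ∫ ω, (∑ i, G i ω) ^ (2 * m) ∂μ = Hpoly k m (fun i => ∫ ω, |G i ω| ∂μ) := by
  have := hindep.isProbabilityMeasure
  rw [hindep.integral_sum_pow hmeas (fun i ω => abs_le_one_of_mem_neg_one_zero_one (hval i ω)),
    ← sum_multinomial_mul_prod_threeValuedMoment]
  simp only [integral_pow_eq_threeValuedMoment (hmeas _) (hval _) (hsymm _)]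

lemma IndepFun.integral_add_mul_pow_two_mul [IsProbabilityMeasure μ] {A B : Ω → ℝ}
    (hAB : IndepFun A B μ) (hA : Measurable A) (hAint : ∀ n, Integrable (fun ω => A ω ^ n) μ)
    (hB : Measurable B) (hBval : ∀ ω, B ω ∈ ({-1, 0, 1} : Set ℝ))
    (hBsymm : μ.map B = μ.map (fun ω => -B ω)) (c : ℝ) (m : ℕ) :
    ∫ ω, (A ω + c * B ω) ^ (2 * m) ∂μ
      = ∫ ω, A ω ^ (2 * m) ∂μ + (∫ ω, |B ω| ∂μ) * ∑ l ∈ Icc 1 m,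
          ((2 * m).choose (2 * l) : ℝ) * c ^ (2 * l) * ∫ ω, A ω ^ (2 * (m - l)) ∂μ := by
  have hint (t : ℕ) : Integrable (fun ω => B ω ^ t * A ω ^ (2 * m - t)) μ :=
    (hAint _).bdd_mul (c := 1) (by fun_prop) (ae_of_all _ fun ω => by
      simpa using pow_le_one₀ (abs_nonneg _) (abs_le_one_of_mem_neg_one_zero_one (hBval ω)))
  have hterm (t : ℕ) : ∫ ω, B ω ^ t * A ω ^ (2 * m - t) ∂μ
      = threeValuedMoment (∫ ω, |B ω| ∂μ) t * ∫ ω, A ω ^ (2 * m - t) ∂μ := by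
    rw [hAB.symm.integral_fun_comp_mul_comp (f := fun y => y ^ t) (g := fun y => y ^ (2 * m - t))
      hB.aemeasurable hA.aemeasurable (continuous_pow _).aestronglyMeasurable
      (continuous_pow _).aestronglyMeasurable, integral_pow_eq_threeValuedMoment hB hBval hBsymm]
  have hexpand (ω : Ω) : (A ω + c * B ω) ^ (2 * m) = ∑ t ∈ range (2 * m + 1),
      ((2 * m).choose t : ℝ) * c ^ t * (B ω ^ t * A ω ^ (2 * m - t)) := by
    rw [add_comm, add_pow]
    exact sum_congr rfl fun t _ => by ring
  simp_rw [hexpand]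
  rw [integral_finsetSum _ fun t _ => (hint t).const_mul _,
    ← sum_choose_mul_threeValuedMoment _ c (fun s => ∫ ω, A ω ^ s ∂μ)]
  exact sum_congr rfl fun t _ => by rw [integral_const_mul, hterm]; ring

lemma iIndepFun.indepFun_sum_castSucc_last {n : ℕ} {g : Fin (n + 1) → Ω → ℝ}
    (hindep : iIndepFun g μ) (hmeas : ∀ i, Measurable (g i)) :
    IndepFun (fun ω => ∑ i : Fin n, g i.castSucc ω) (g (Fin.last n)) μ := by
  convert hindep.indepFun_finsetSum_of_notMem hmeas (s := univ.map Fin.castSuccEmb)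
    (i := Fin.last n) (by simp [Fin.castSucc_ne_last]) using 1
  funext ω
  simp

end ProbabilityTheory

instance : IsProbabilityMeasure mu01 :=
  ⟨by simp [mu01, Real.volume_Icc]⟩

theorem norm_sum_three_valued_perturbed_general (k : ℕ) (j : ℕ)
    (μvec : Fin k → ℝ) (ν : ℝ) (g : Fin (k + 1) → ℝ → ℝ)
    (hmeas : ∀ i, Measurable (g i))
    (hval : ∀ i x, g i x ∈ ({-1, 0, 1} : Set ℝ))
    (hindep : iIndepFun g mu01)
    (hsymm : ∀ i, mu01.map (g i) = mu01.map (fun x => - g i x))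
    (habs : ∀ i : Fin k, ∫ x, |g (Fin.castSucc i) x| ∂mu01 = μvec i)
    (habslast : ∫ x, |g (Fin.last k) x| ∂mu01 = ν)
    (m : ℕ) :
    ∫ x, ((∑ i : Fin k, g (Fin.castSucc i) x) + (j : ℝ) * g (Fin.last k) x) ^ (2 * m) ∂mu01
      = Fpoly k j m μvec ν := by
  set A : ℝ → ℝ := fun x => ∑ i : Fin k, g (Fin.castSucc i) x
  have hA : Measurable A := Finset.measurable_fun_sum _ fun i _ => hmeas _
  have hA_bdd (x : ℝ) : |A x| ≤ k := (abs_sum_le_sum_abs _ _).trans <|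
    (sum_le_sum fun i _ => abs_le_one_of_mem_neg_one_zero_one (hval _ x)).trans (by simp)
  have hA_int (n : ℕ) : Integrable (fun x => A x ^ n) mu01 :=
    .of_bound (by fun_prop) (k ^ n) (ae_of_all _ fun x => by
      simpa using pow_le_pow_left₀ (abs_nonneg _) (hA_bdd x) n)
  have hA_moment (l : ℕ) : ∫ x, A x ^ (2 * l) ∂mu01 = Hpoly k l μvec := by
    rw [← funext habs]
    exact integral_sum_pow_two_mul_eq_Hpoly (hindep.precomp (Fin.castSucc_injective k))
      (fun _ => hmeas _) (fun _ => hval _) (fun _ => hsymm _) l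
  rw [(hindep.indepFun_sum_castSucc_last hmeas).integral_add_mul_pow_two_mul hA hA_int (hmeas _)
    (hval _) (hsymm _), habslast, Fpoly]
  simp only [A] at hA_moment
  simp only [hA_moment]

/-- **Lemma `normf`.** If `g₁, …, g_k, g_{k+1}` are independent symmetric `{-1,0,1}`-valued
random variables with `∫ |gᵢ| = μᵢ` for `i ≤ k` and `∫ |g_{k+1}| = ν`, and
`f = ∑_{i=1}^k gᵢ + j g_{k+1}`, then `‖f‖_{2m}^{2m} = F^{(j)}_m(μ₁, …, μ_k, ν)` for
every `1 ≤ m ≤ k`. -/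
theorem norm_sum_three_valued_perturbed (k : ℕ) (hk : 1 ≤ k) (j : ℕ) (hj : 1 ≤ j)
    (μvec : Fin k → ℝ) (ν : ℝ) (g : Fin (k + 1) → ℝ → ℝ)
    (hmeas : ∀ i, Measurable (g i))
    (hval : ∀ i x, g i x ∈ ({-1, 0, 1} : Set ℝ))
    (hindep : iIndepFun g mu01)
    (hsymm : ∀ i, mu01.map (g i) = mu01.map (fun x => - g i x))
    (habs : ∀ i : Fin k, ∫ x, |g (Fin.castSucc i) x| ∂mu01 = μvec i)
    (habslast : ∫ x, |g (Fin.last k) x| ∂mu01 = ν)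
    (m : ℕ) (hm1 : 1 ≤ m) (hmk : m ≤ k) :
    ∫ x, ((∑ i : Fin k, g (Fin.castSucc i) x) + (j : ℝ) * g (Fin.last k) x) ^ (2 * m) ∂mu01
      = Fpoly k j m μvec ν :=
  norm_sum_three_valued_perturbed_general k j μvec ν g hmeas hval hindep hsymm habs habslast m
end

section
/- Let $k \ge 2$ and $p = 2k$. Suppose $1 > \overline{\mu}_1 > \overline{\mu}_2 > \cdots > \overline{\mu}_k > 0$ and $\{g_{j,i}\}_{j \in \mathbb{N}, 1 \le i \le k}$ is a family of independent symmetric random variables on $[0,1]$ taking only the values $-1, 0, 1$ with $\int |g_{j,i}| = \overline{\mu}_i$ for all $j$. Then $V_p$, the closed linear span in $L_p[0,1]$ of $\{h_j = \sum_{i=1}^k g_{j,i} : j \in \mathbb{N}\}$, is complemented in $L_p[0,1]$. -/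
open MeasureTheory ProbabilityTheory Finset
open scoped ENNReal NNReal

/-!
Write `h_j = ∑ᵢ g_{j,i}` and `σ² = ∑ᵢ μ̄ᵢ`. By independence and symmetry the `g_{j,i}` are
orthogonal in `L₂` with `‖g_{j,i}‖₂² = μ̄ᵢ`, so the `h_j / σ` are orthonormal in `L₂`.
Conversely, a Khintchine-type estimate bounds `L_{2k}` norms by `L₂` norms on their span:
expanding `(∑ b_v g_v)^{2k}` by the multinomial theorem, odd moments vanish by symmetry and
even moments lie in `[0, 1]`, whence `‖∑ⱼ γⱼ h_j‖_{2k} ≤ √((2k)! k) ‖γ‖₂`.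
Hence `P f = σ⁻² ∑ⱼ ⟨f, h_j⟩ h_j` converges in `L_{2k}` and, by Bessel's inequality,
is a bounded projection onto the closed span of the `h_j`.
-/

instance inst_s15 : IsProbabilityMeasure mu01 := by
  constructor
  rw [mu01, Measure.restrict_apply_univ, Real.volume_Icc]
  norm_num

section Moments

variable {Ω : Type*} [MeasurableSpace Ω] {μ : Measure Ω} {f : Ω → ℝ}

lemma abs_le_one_of_ternary (hf : ∀ᵐ x ∂μ, f x ∈ ({-1, 0, 1} : Set ℝ)) :
    ∀ᵐ x ∂μ, |f x| ≤ 1 := by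
  filter_upwards [hf] with x hx
  simp only [Set.mem_insert_iff, Set.mem_singleton_iff] at hx
  rcases hx with h | h | h <;> simp [h]

lemma pow_ae_eq_self_of_ternary (hf : ∀ᵐ x ∂μ, f x ∈ ({-1, 0, 1} : Set ℝ)) {d : ℕ}
    (hd : Odd d) : (fun x => f x ^ d) =ᵐ[μ] f := by
  filter_upwards [hf] with x hx
  simp only [Set.mem_insert_iff, Set.mem_singleton_iff] at hx
  rcases hx with h | h | h <;> simp [h, hd.neg_one_pow, hd.pos.ne']

lemma sq_ae_eq_abs_of_ternary (hf : ∀ᵐ x ∂μ, f x ∈ ({-1, 0, 1} : Set ℝ)) :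
    (fun x => f x ^ 2) =ᵐ[μ] fun x => |f x| := by
  filter_upwards [hf] with x hx
  simp only [Set.mem_insert_iff, Set.mem_singleton_iff] at hx
  rcases hx with h | h | h <;> simp [h]

lemma integral_eq_zero_of_map_eq_map_neg (hf : AEMeasurable f μ)
    (hsymm : μ.map f = μ.map (fun x => -f x)) : ∫ x, f x ∂μ = 0 := by
  have h := integral_map (φ := f) (f := id) hf aestronglyMeasurable_id
  rw [hsymm, integral_map (φ := fun x => -f x) hf.neg aestronglyMeasurable_id] at h
  simp only [id, integral_neg] at h
  linarith

lemma integral_pow_le_one_of_abs_le_one [IsProbabilityMeasure μ] (hf : ∀ᵐ x ∂μ, |f x| ≤ 1)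
    (d : ℕ) : ∫ x, f x ^ d ∂μ ≤ 1 := by
  have h := norm_integral_le_of_norm_le_const (μ := μ) (f := fun x => f x ^ d) (C := 1) <| by
    filter_upwards [hf] with x hx
    simpa [abs_pow] using pow_le_one₀ (abs_nonneg _) hx
  simpa using (le_abs_self _).trans h

end Moments

lemma ProbabilityTheory.iIndepFun.integral_finset_prod {Ω ι : Type*} [MeasurableSpace Ω]
    {μ : Measure Ω} {G : ι → Ω → ℝ} (hind : iIndepFun G μ) (hm : ∀ v, AEMeasurable (G v) μ)
    (u : Finset ι) : ∫ x, ∏ v ∈ u, G v x ∂μ = ∏ v ∈ u, ∫ x, G v x ∂μ := by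
  have h := (hind.precomp (g := ((↑) : u → ι)) Subtype.val_injective)
    |>.integral_fun_prod_eq_prod_integral fun v => (hm v).aestronglyMeasurable
  rw [← Finset.prod_coe_sort u]
  simp_rw [← Finset.prod_coe_sort u (fun v => G v _)]
  exact h

lemma integral_mul_eq_ite_of_iIndepFun {Ω ι : Type*} [MeasurableSpace Ω] {μ : Measure Ω}
    [DecidableEq ι] {G : ι → Ω → ℝ} (hind : iIndepFun G μ) (hm : ∀ v, AEMeasurable (G v) μ)
    (hval : ∀ v, ∀ᵐ x ∂μ, G v x ∈ ({-1, 0, 1} : Set ℝ))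
    (hsymm : ∀ v, μ.map (G v) = μ.map (fun x => -G v x)) (v w : ι) :
    ∫ x, G v x * G w x ∂μ = if v = w then ∫ x, |G v x| ∂μ else 0 := by
  split_ifs with hvw
  · subst hvw
    exact integral_congr_ae <| (sq_ae_eq_abs_of_ternary (hval v)).mono fun x hx =>
      (sq (G v x)).symm.trans hx
  · rw [(hind.indepFun hvw).integral_fun_mul_eq_mul_integral (hm v).aestronglyMeasurable
      (hm w).aestronglyMeasurable, integral_eq_zero_of_map_eq_map_neg (hm v) (hsymm v), zero_mul]

lemma Nat.multinomial_le_factorial_sum {α : Type*} (s : Finset α) (f : α → ℕ) :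
    Nat.multinomial s f ≤ (∑ i ∈ s, f i).factorial :=
  Nat.le_of_dvd (Nat.factorial_pos _) (Dvd.intro_left _ (Nat.multinomial_spec s f))

section Khintchine

variable {Ω ι : Type*} [MeasurableSpace Ω] {μ : Measure Ω} [IsProbabilityMeasure μ]
  {G : ι → Ω → ℝ}

lemma integral_sum_mul_pow_eq [DecidableEq ι] (hind : iIndepFun G μ)
    (hm : ∀ v, AEMeasurable (G v) μ)
    (hb : ∀ v, ∀ᵐ x ∂μ, |G v x| ≤ 1) (u : Finset ι) (b : ι → ℝ) (n : ℕ) :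
    ∫ x, (∑ v ∈ u, b v * G v x) ^ n ∂μ = ∑ d ∈ piAntidiag u n,
      (Nat.multinomial u d * ∏ v ∈ u, b v ^ d v) * ∏ v ∈ u, ∫ x, G v x ^ d v ∂μ := by
  have hint (d : ι → ℕ) : Integrable (fun x => ∏ v ∈ u, G v x ^ d v) μ := by
    refine .of_bound (Finset.aestronglyMeasurable_fun_prod u fun v _ =>
      ((hm v).pow_const _).aestronglyMeasurable) 1 ?_
    filter_upwards [(Filter.eventually_all_finset u).2 fun v _ => hb v] with x hx
    rw [Real.norm_eq_abs, abs_prod]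
    exact prod_le_one (fun _ _ => abs_nonneg _) fun v hv => by
      rw [abs_pow]; exact pow_le_one₀ (abs_nonneg _) (hx v hv)
  simp_rw [sum_pow_eq_sum_piAntidiag, mul_pow, prod_mul_distrib, ← mul_assoc]
  rw [integral_finsetSum _ fun d _ => (hint d).const_mul _]
  refine sum_congr rfl fun d _ => ?_
  rw [integral_const_mul]
  exact congrArg _ <| (hind.comp (fun v => (· ^ d v)) fun v => measurable_id.pow_const _)
    |>.integral_finset_prod (fun v => (hm v).pow_const _) u

theorem integral_sum_mul_pow_le (hind : iIndepFun G μ) (hm : ∀ v, AEMeasurable (G v) μ)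
    (hval : ∀ v, ∀ᵐ x ∂μ, G v x ∈ ({-1, 0, 1} : Set ℝ))
    (hsymm : ∀ v, μ.map (G v) = μ.map (fun x => -G v x)) (u : Finset ι) (b : ι → ℝ) (K : ℕ) :
    ∫ x, (∑ v ∈ u, b v * G v x) ^ (2 * K) ∂μ ≤ (2 * K).factorial * (∑ v ∈ u, b v ^ 2) ^ K := by
  let _ : DecidableEq ι := Classical.decEq ι
  have hb v := abs_le_one_of_ternary (hval v)
  set A : (ι → ℕ) → ℝ := fun d =>
    (Nat.multinomial u d * ∏ v ∈ u, b v ^ d v) * ∏ v ∈ u, ∫ x, G v x ^ d v ∂μ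
  have hodd : ∀ d ∈ piAntidiag u (2 * K), A d ≠ 0 → ∀ v ∈ u, 2 ∣ d v := by
    intro d _ hd v hv
    by_contra hdvd
    refine hd (mul_eq_zero_of_right _ (prod_eq_zero hv ?_))
    rw [integral_congr_ae <| pow_ae_eq_self_of_ternary (hval v) <|
      Nat.odd_iff.2 (Nat.two_dvd_ne_zero.1 hdvd)]
    exact integral_eq_zero_of_map_eq_map_neg (hm v) (hsymm v)
  have heven : ∀ d ∈ piAntidiag u (2 * K), (∀ v ∈ u, 2 ∣ d v) →
      A d ≤ (2 * K).factorial * ∏ v ∈ u, b v ^ d v := by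
    intro d hd heven
    have hpow (v : ι) (hv : v ∈ u) (y : ℝ) : 0 ≤ y ^ d v :=
      (even_iff_two_dvd.2 (heven v hv)).pow_nonneg _
    have hmom : ∏ v ∈ u, ∫ x, G v x ^ d v ∂μ ≤ 1 :=
      prod_le_one (fun v hv => integral_nonneg fun x => hpow v hv _)
        fun v _ => integral_pow_le_one_of_abs_le_one (hb v) _
    have hmult : (Nat.multinomial u d : ℝ) ≤ (2 * K).factorial := by
      rw [← (mem_piAntidiag.1 hd).1]; exact_mod_cast Nat.multinomial_le_factorial_sum u d
    have hbd : 0 ≤ ∏ v ∈ u, b v ^ d v := prod_nonneg fun v hv => hpow v hv _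
    calc A d ≤ Nat.multinomial u d * ∏ v ∈ u, b v ^ d v :=
          mul_le_of_le_one_right (by positivity) hmom
      _ ≤ _ := by gcongr
  calc ∫ x, (∑ v ∈ u, b v * G v x) ^ (2 * K) ∂μ = ∑ d ∈ piAntidiag u (2 * K), A d :=
        integral_sum_mul_pow_eq hind hm hb u b _
    _ = ∑ d ∈ piAntidiag u (2 * K) with ∀ v ∈ u, 2 ∣ d v, A d := (sum_filter_of_ne hodd).symm
    _ ≤ ∑ d ∈ piAntidiag u (2 * K) with ∀ v ∈ u, 2 ∣ d v,
          ((2 * K).factorial : ℝ) * ∏ v ∈ u, b v ^ d v :=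
        sum_le_sum fun d hd => heven d (mem_filter.1 hd).1 (mem_filter.1 hd).2
    _ = ∑ m ∈ piAntidiag u K, ((2 * K).factorial : ℝ) * ∏ v ∈ u, (b v ^ 2) ^ m v := by
        -- the even multi-indices of degree `2K` are the `2 • m` with `m` of degree `K`
        rw [← map_nsmul_piAntidiag u K two_ne_zero, sum_map]
        simp [pow_mul]
    _ ≤ ∑ m ∈ piAntidiag u K,
          ((2 * K).factorial : ℝ) * (Nat.multinomial u m * ∏ v ∈ u, (b v ^ 2) ^ m v) := by
        gcongr with m
        exact le_mul_of_one_le_left (by positivity) (by exact_mod_cast Nat.multinomial_pos u m)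
    _ = (2 * K).factorial * (∑ v ∈ u, b v ^ 2) ^ K := by
        rw [sum_pow_eq_sum_piAntidiag, mul_sum]

end Khintchine

namespace MeasureTheory.Lp

variable {Ω : Type*} [MeasurableSpace Ω] {μ : Measure Ω}

lemma norm_pow_eq_integral_norm_pow {E : Type*} [NormedAddCommGroup E] {n : ℕ} (hn : n ≠ 0)
    (f : Lp E n μ) : ‖f‖ ^ n = ∫ x, ‖f x‖ ^ n ∂μ := by
  rw [Lp.norm_def, (Lp.memLp f).eLpNorm_eq_integral_rpow_norm (by simpa) (ENNReal.natCast_ne_top n),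
    ENNReal.toReal_ofReal (by positivity)]
  simp only [ENNReal.toReal_natCast, Real.rpow_natCast]
  exact Real.rpow_inv_natCast_pow (integral_nonneg fun _ => by positivity) hn

variable [IsProbabilityMeasure μ] {p q : ℝ≥0∞}

variable (μ) in
noncomputable def inclusion {E : Type*} [NormedAddCommGroup E] [NormedSpace ℝ E] [Fact (1 ≤ p)]
    [Fact (1 ≤ q)] (hqp : q ≤ p) : Lp E p μ →L[ℝ] Lp E q μ :=
  LinearMap.mkContinuous
    { toFun := fun f => ((Lp.memLp f).mono_exponent hqp).toLp f
      map_add' := fun f g => by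
        rw [← MemLp.toLp_add]
        exact MemLp.toLp_congr _ _ (coeFn_add f g)
      map_smul' := fun c f => by
        rw [RingHom.id_apply, ← MemLp.toLp_const_smul]
        exact MemLp.toLp_congr _ _ (coeFn_smul c f) }
    1 fun f => by
      rw [LinearMap.coe_mk, AddHom.coe_mk, one_mul, Lp.norm_toLp, Lp.norm_def]
      exact ENNReal.toReal_mono (eLpNorm_ne_top f)
        (eLpNorm_le_eLpNorm_of_exponent_le hqp (Lp.aestronglyMeasurable f))

lemma inner_inclusion [Fact (1 ≤ p)] (hp : 2 ≤ p) (f g : Lp ℝ p μ) :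
    inner ℝ (inclusion μ hp f) (inclusion μ hp g) = ∫ x, f x * g x ∂μ := by
  rw [L2.inner_def]
  refine integral_congr_ae ?_
  filter_upwards [MemLp.coeFn_toLp ((Lp.memLp f).mono_exponent hp),
    MemLp.coeFn_toLp ((Lp.memLp g).mono_exponent hp)] with x hf hg
  simp only [inclusion, LinearMap.mkContinuous_apply, LinearMap.coe_mk, AddHom.coe_mk]
  rw [hf, hg]
  simp [mul_comm]

theorem norm_sum_smul_le_of_iIndepFun {ι : Type*} {K : ℕ} (hK : K ≠ 0)
    {G : ι → Lp ℝ ((2 * K : ℕ) : ℝ≥0∞) μ} (hind : iIndepFun (fun v => ⇑(G v)) μ)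
    (hval : ∀ v, ∀ᵐ x ∂μ, G v x ∈ ({-1, 0, 1} : Set ℝ))
    (hsymm : ∀ v, μ.map (G v) = μ.map (fun x => -G v x)) (u : Finset ι) (b : ι → ℝ) :
    ‖∑ v ∈ u, b v • G v‖ ≤ √((2 * K).factorial) * √(∑ v ∈ u, b v ^ 2) := by
  set F := ∑ v ∈ u, b v • G v
  have hF : F =ᵐ[μ] fun x => ∑ v ∈ u, b v * G v x := by
    filter_upwards [coeFn_fun_finsetSum u (fun v => b v • G v),
      (Filter.eventually_all_finset u).2 fun v _ => coeFn_smul (b v) (G v)] with x hsum hsmul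
    rw [hsum]
    exact sum_congr rfl fun v hv => hsmul v hv
  have hmom : (‖F‖ ^ 2) ^ K ≤ ((2 * K).factorial * ∑ v ∈ u, b v ^ 2) ^ K := by
    calc (‖F‖ ^ 2) ^ K = ∫ x, ‖F x‖ ^ (2 * K) ∂μ := by
          rw [← pow_mul, norm_pow_eq_integral_norm_pow (by omega)]
      _ = ∫ x, (∑ v ∈ u, b v * G v x) ^ (2 * K) ∂μ := integral_congr_ae <| hF.mono fun x hx => by
          simp only [hx, Real.norm_eq_abs, (even_two_mul K).pow_abs]
      _ ≤ (2 * K).factorial * (∑ v ∈ u, b v ^ 2) ^ K :=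
          integral_sum_mul_pow_le hind (fun v => (Lp.aestronglyMeasurable (G v)).aemeasurable)
            hval hsymm u b K
      _ ≤ ((2 * K).factorial * ∑ v ∈ u, b v ^ 2) ^ K := by
          rw [mul_pow]
          gcongr
          exact le_self_pow₀ (by exact_mod_cast (2 * K).factorial_pos) hK
  rw [← Real.sqrt_mul (by positivity)]
  exact (le_abs_self _).trans <| Real.abs_le_sqrt <|
    (pow_le_pow_iff_left₀ (by positivity) (by positivity) hK).1 hmom

theorem norm_sum_smul_sum_le_of_iIndepFun {ι κ : Type*} [Fintype κ] {K : ℕ} (hK : K ≠ 0)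
    {G : ι → κ → Lp ℝ ((2 * K : ℕ) : ℝ≥0∞) μ}
    (hind : iIndepFun (fun v : ι × κ => ⇑(G v.1 v.2)) μ)
    (hval : ∀ j i, ∀ᵐ x ∂μ, G j i x ∈ ({-1, 0, 1} : Set ℝ))
    (hsymm : ∀ j i, μ.map (G j i) = μ.map (fun x => -G j i x)) (t : Finset ι) (γ : ι → ℝ) :
    ‖∑ j ∈ t, γ j • ∑ i, G j i‖ ≤
      √((2 * K).factorial) * √(Fintype.card κ) * √(∑ j ∈ t, γ j ^ 2) := by
  have hsum : ∑ j ∈ t, γ j • ∑ i, G j i = ∑ v ∈ t ×ˢ univ, γ v.1 • G v.1 v.2 := by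
    simp only [sum_product, smul_sum]
  have hsq : ∑ v ∈ t ×ˢ (univ : Finset κ), γ v.1 ^ 2 = Fintype.card κ * ∑ j ∈ t, γ j ^ 2 := by
    simp only [sum_product, sum_const, card_univ, nsmul_eq_mul, mul_sum]
  rw [hsum, mul_assoc, ← Real.sqrt_mul (Nat.cast_nonneg _), ← hsq]
  exact norm_sum_smul_le_of_iIndepFun hK hind (fun v => hval v.1 v.2) (fun v => hsymm v.1 v.2) _ _

lemma orthonormal_smul_inclusion_sum {ι κ : Type*} [Fintype κ] [DecidableEq ι] [DecidableEq κ]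
    [Fact (1 ≤ p)] (hp : 2 ≤ p) {G : ι → κ → Lp ℝ p μ} {m : κ → ℝ} (hm : 0 < ∑ i, m i)
    (hcov : ∀ j j' i i', ∫ x, G j i x * G j' i' x ∂μ = if (j, i) = (j', i') then m i else 0) :
    Orthonormal ℝ fun j => ((√(∑ i, m i))⁻¹ • inclusion μ hp) (∑ i, G j i) := by
  rw [orthonormal_iff_ite]
  intro j j'
  simp only [smul_apply, map_sum, real_inner_smul_left, real_inner_smul_right,
    sum_inner, inner_sum, inner_inclusion, hcov, Prod.mk.injEq]
  split_ifs with hjj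
  · subst hjj
    simp only [true_and, sum_ite_eq', mem_univ, if_true, ← mul_sum, ← mul_assoc]
    rw [← mul_inv, ← sq, Real.sq_sqrt hm.le, inv_mul_cancel₀ hm.ne']
  · simp [hjj]

end MeasureTheory.Lp

section Projection

variable {ι E H : Type*} [NormedAddCommGroup E] [CompleteSpace E]

lemma summable_of_norm_sum_le_mul_sqrt {v : ι → E} {c : ι → ℝ} (hc : Summable fun j => c j ^ 2)
    {C : ℝ} (hC : 0 ≤ C) (hv : ∀ t : Finset ι, ‖∑ j ∈ t, v j‖ ≤ C * √(∑ j ∈ t, c j ^ 2)) :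
    Summable v := by
  rw [summable_iff_vanishing_norm] at hc ⊢
  intro ε hε
  obtain ⟨s, hs⟩ := hc ((ε / (C + 1)) ^ 2) (by positivity)
  refine ⟨s, fun t ht => (hv t).trans_lt ?_⟩
  have hsq := hs t ht
  rw [Real.norm_of_nonneg (sum_nonneg fun _ _ => sq_nonneg _)] at hsq
  have hsqrt : √(∑ j ∈ t, c j ^ 2) < ε / (C + 1) := (Real.sqrt_lt' (by positivity)).2 hsq
  calc C * √(∑ j ∈ t, c j ^ 2) ≤ C * (ε / (C + 1)) := by gcongr
    _ < ε := by rw [← mul_div_assoc, div_lt_iff₀ (by positivity)]; nlinarith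

lemma norm_tsum_le_mul_sqrt {v : ι → E} {c : ι → ℝ} (hc : Summable fun j => c j ^ 2)
    {C : ℝ} (hC : 0 ≤ C) (hv : ∀ t : Finset ι, ‖∑ j ∈ t, v j‖ ≤ C * √(∑ j ∈ t, c j ^ 2)) :
    ‖∑' j, v j‖ ≤ C * √(∑' j, c j ^ 2) := by
  refine le_of_tendsto (summable_of_norm_sum_le_mul_sqrt hc hC hv).hasSum.norm
    (Filter.Eventually.of_forall fun t => (hv t).trans ?_)
  gcongr
  exact hc.sum_le_tsum t fun j _ => sq_nonneg _

variable [NormedSpace ℝ E] [NormedAddCommGroup H] [InnerProductSpace ℝ H]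

theorem exists_projection_topologicalClosure_span (T : E →L[ℝ] H) {h : ι → E}
    (horth : Orthonormal ℝ fun j => T (h j)) {C : ℝ} (hC : 0 ≤ C)
    (hbound : ∀ (t : Finset ι) (γ : ι → ℝ), ‖∑ j ∈ t, γ j • h j‖ ≤ C * √(∑ j ∈ t, γ j ^ 2)) :
    ∃ P : E →L[ℝ] E, (∀ f, P f ∈ (Submodule.span ℝ (Set.range h)).topologicalClosure) ∧
      ∀ f ∈ (Submodule.span ℝ (Set.range h)).topologicalClosure, P f = f := by
  classical
  set c : E → ι → ℝ := fun f j => inner ℝ (T (h j)) (T f) with hc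
  have hbessel (f : E) : Summable fun j => c f j ^ 2 := by
    simpa only [Real.norm_eq_abs, sq_abs] using horth.inner_products_summable (T f)
  have hsum (f : E) : Summable fun j => c f j • h j :=
    summable_of_norm_sum_le_mul_sqrt (hbessel f) hC fun t => hbound t (c f)
  have hcoeff (f : E) : √(∑' j, c f j ^ 2) ≤ ‖T‖ * ‖f‖ := by
    rw [Real.sqrt_le_left (by positivity)]
    calc ∑' j, c f j ^ 2 ≤ ‖T f‖ ^ 2 := by
          simpa only [Real.norm_eq_abs, sq_abs] using horth.tsum_inner_products_le (T f)
      _ ≤ (‖T‖ * ‖f‖) ^ 2 := by gcongr; exact T.le_opNorm f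
  let P₀ : E →ₗ[ℝ] E :=
    { toFun := fun f => ∑' j, c f j • h j
      map_add' := fun f f' => by
        simp only [hc, map_add, inner_add_right, add_smul]
        exact (hsum f).tsum_add (hsum f')
      map_smul' := fun r f => by
        simp only [hc, map_smul, inner_smul_right, mul_smul, RingHom.id_apply]
        exact (hsum f).tsum_const_smul r }
  let P : E →L[ℝ] E := P₀.mkContinuous (C * ‖T‖) fun f => by
    calc ‖∑' j, c f j • h j‖ ≤ C * √(∑' j, c f j ^ 2) :=
          norm_tsum_le_mul_sqrt (hbessel f) hC fun t => hbound t (c f)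
      _ ≤ C * (‖T‖ * ‖f‖) := by gcongr; exact hcoeff f
      _ = C * ‖T‖ * ‖f‖ := by ring
  refine ⟨P, fun f => ?_, fun f hf => ?_⟩
  · exact (Submodule.isClosed_topologicalClosure _).mem_of_tendsto (hsum f).hasSum
      (Filter.Eventually.of_forall fun t => Submodule.le_topologicalClosure _ <|
        Submodule.sum_mem _ fun j _ => Submodule.smul_mem _ _ (Submodule.subset_span ⟨j, rfl⟩))
  · have hfix : Set.EqOn P (ContinuousLinearMap.id ℝ E) (Set.range h) := by
      rintro _ ⟨i, rfl⟩
      have hci (j : ι) : c (h i) j = if j = i then 1 else 0 :=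
        orthonormal_iff_ite.1 horth j i
      show ∑' j, c (h i) j • h j = h i
      rw [tsum_eq_single i fun j hj => by rw [hci, if_neg hj, zero_smul], hci, if_pos rfl,
        one_smul]
    exact ContinuousLinearMap.eqOn_closure_span hfix
      (by rwa [← Submodule.topologicalClosure_coe])

end Projection

theorem Vp_complemented_general (k : ℕ)
    [Fact (1 ≤ ((2 * k : ℕ) : ℝ≥0∞))]
    (μbar : Fin k → ℝ)
    (hpos : ∀ i, 0 < μbar i)
    (g : ℕ → Fin k → Lp ℝ ((2 * k : ℕ) : ℝ≥0∞) mu01)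
    (hval : ∀ j i, ∀ᵐ x ∂mu01, g j i x ∈ ({-1, 0, 1} : Set ℝ))
    (hindep : iIndepFun
      (fun x : ℕ × Fin k => ⇑(g x.1 x.2)) mu01)
    (hsymm : ∀ j i, mu01.map ⇑(g j i) = mu01.map (fun x => - g j i x))
    (habs : ∀ j i, ∫ x, |g j i x| ∂mu01 = μbar i) :
    ∃ P : Lp ℝ ((2 * k : ℕ) : ℝ≥0∞) mu01 →L[ℝ] Lp ℝ ((2 * k : ℕ) : ℝ≥0∞) mu01,
      (∀ f, P f ∈ (Submodule.span ℝ
          (Set.range fun j : ℕ => ∑ i, g j i)).topologicalClosure) ∧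
      ∀ f ∈ (Submodule.span ℝ
          (Set.range fun j : ℕ => ∑ i, g j i)).topologicalClosure, P f = f := by
  have hk : k ≠ 0 := by
    rintro rfl
    simpa using (Fact.out : 1 ≤ ((2 * 0 : ℕ) : ℝ≥0∞))
  have hp : (2 : ℝ≥0∞) ≤ ((2 * k : ℕ) : ℝ≥0∞) := by exact_mod_cast (by omega : 2 ≤ 2 * k)
  have hμbar : 0 < ∑ i, μbar i := sum_pos (fun i _ => hpos i) ⟨⟨0, by omega⟩, mem_univ _⟩
  have hcov (j j' : ℕ) (i i' : Fin k) :
      ∫ x, g j i x * g j' i' x ∂mu01 = if (j, i) = (j', i') then μbar i else 0 := by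
    rw [integral_mul_eq_ite_of_iIndepFun hindep
      (fun v => (Lp.aestronglyMeasurable (g v.1 v.2)).aemeasurable) (fun v => hval v.1 v.2)
      (fun v => hsymm v.1 v.2) (j, i) (j', i'), habs]
  -- rescaling the embedding into `L₂` rather than the `h_j` leaves their span unchanged
  exact exists_projection_topologicalClosure_span _
    (Lp.orthonormal_smul_inclusion_sum hp hμbar hcov) (by positivity)
    (Lp.norm_sum_smul_sum_le_of_iIndepFun hk hindep hval hsymm)

/-- **Corollary `vp`.** For `p = 2k` even, `k ≥ 2`, if `{g_{j,i}}_{j ∈ ℕ, 1 ≤ i ≤ k}` is a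
family of independent symmetric `{-1,0,1}`-valued random variables with `∫ |g_{j,i}| = μ̄ᵢ`
where `1 > μ̄₁ > ⋯ > μ̄_k > 0`, then `V_p`, the closed linear span in `L_p[0,1]` of the
sums `h_j = ∑_{i=1}^k g_{j,i}`, is complemented in `L_p[0,1]`. -/
theorem Vp_complemented (k : ℕ) (hk : 2 ≤ k)
    [Fact (1 ≤ ((2 * k : ℕ) : ℝ≥0∞))]
    (μbar : Fin k → ℝ)
    (hdec : ∀ i i' : Fin k, i < i' → μbar i' < μbar i)
    (hlt1 : ∀ i, μbar i < 1) (hpos : ∀ i, 0 < μbar i)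
    (g : ℕ → Fin k → Lp ℝ ((2 * k : ℕ) : ℝ≥0∞) mu01)
    (hval : ∀ j i, ∀ᵐ x ∂mu01, g j i x ∈ ({-1, 0, 1} : Set ℝ))
    (hindep : iIndepFun
      (fun x : ℕ × Fin k => ⇑(g x.1 x.2)) mu01)
    (hsymm : ∀ j i, mu01.map ⇑(g j i) = mu01.map (fun x => - g j i x))
    (habs : ∀ j i, ∫ x, |g j i x| ∂mu01 = μbar i) :
    ∃ P : Lp ℝ ((2 * k : ℕ) : ℝ≥0∞) mu01 →L[ℝ] Lp ℝ ((2 * k : ℕ) : ℝ≥0∞) mu01,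
      (∀ f, P f ∈ (Submodule.span ℝ
          (Set.range fun j : ℕ => ∑ i, g j i)).topologicalClosure) ∧
      ∀ f ∈ (Submodule.span ℝ
          (Set.range fun j : ℕ => ∑ i, g j i)).topologicalClosure, P f = f :=
  Vp_complemented_general k μbar hpos g hval hindep hsymm habs
end
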